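/- The order-3 braided antisymmetriser A⁽³⁾ := (id − σ₂) ∘ (id − σ₁ + σ₁∘σ₂) on V⊗V⊗V has rank 1, and its range is spanned by A⁽³⁾(ω₋⊗ω₊⊗ω_z). -/

import Mathlib

open TensorProduct

noncomputable section

/-- The 3-dimensional complex vector space with basis `ω 0 = ω₋`, `ω 1 = ω₊`, `ω 2 = ω_z`. -/
abbrev V : Type := Fin 3 → ℂ

/-- The distinguished basis `(ω₋, ω₊, ω_z)` of `V`. -/
def ω : Fin 3 → V := fun i => Pi.basisFun ℂ (Fin 3) i

/-- The basis `ω_a ⊗ ω_b` of `V ⊗ V`. -/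
def basisVV : Module.Basis (Fin 3 × Fin 3) ℂ (V ⊗[ℂ] V) :=
  (Pi.basisFun ℂ (Fin 3)).tensorProduct (Pi.basisFun ℂ (Fin 3))

/-- The values of the braiding `σ` on the basis vectors `ω_a ⊗ ω_b`
(first index `0 = −`, `1 = +`, `2 = z`). -/
def σval (q : ℝ) : Fin 3 → Fin 3 → V ⊗[ℂ] V :=
  ![![ω 0 ⊗ₜ[ℂ] ω 0,
     (1 - (q : ℂ) ^ 2) • (ω 0 ⊗ₜ[ℂ] ω 1) + ((q : ℂ) ^ 2)⁻¹ • (ω 1 ⊗ₜ[ℂ] ω 0),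
     (1 - (q : ℂ) ^ 2) • (ω 0 ⊗ₜ[ℂ] ω 2) + ((q : ℂ) ^ 4)⁻¹ • (ω 2 ⊗ₜ[ℂ] ω 0)],
    ![(q : ℂ) ^ 4 • (ω 0 ⊗ₜ[ℂ] ω 1),
      ω 1 ⊗ₜ[ℂ] ω 1,
      (q : ℂ) ^ 6 • (ω 2 ⊗ₜ[ℂ] ω 1)],
    ![(q : ℂ) ^ 6 • (ω 0 ⊗ₜ[ℂ] ω 2),
      (1 - (q : ℂ) ^ 2) • (ω 2 ⊗ₜ[ℂ] ω 1) + ((q : ℂ) ^ 4)⁻¹ • (ω 1 ⊗ₜ[ℂ] ω 2),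
      ω 2 ⊗ₜ[ℂ] ω 2]]

/-- The braiding `σ` of Woronowicz's 3d left covariant calculus on `SU_q(2)`. -/
def σmap (q : ℝ) : (V ⊗[ℂ] V) →ₗ[ℂ] (V ⊗[ℂ] V) :=
  basisVV.constr ℂ (fun p => σval q p.1 p.2)

/-- `V ⊗ V ⊗ V`. -/
abbrev V3 : Type := V ⊗[ℂ] (V ⊗[ℂ] V)

instance : AddCommGroup V3 := inferInstance
instance : Module ℂ V3 := inferInstance

/-- `σ₁ = σ ⊗ id` acting on the first two tensor slots of `V ⊗ V ⊗ V`. -/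
def σ₁ (q : ℝ) : V3 →ₗ[ℂ] V3 :=
  (TensorProduct.assoc ℂ V V V).toLinearMap ∘ₗ
    (TensorProduct.map (σmap q) LinearMap.id) ∘ₗ
      (TensorProduct.assoc ℂ V V V).symm.toLinearMap

/-- `σ₂ = id ⊗ σ` acting on the last two tensor slots of `V ⊗ V ⊗ V`. -/
def σ₂ (q : ℝ) : V3 →ₗ[ℂ] V3 :=
  TensorProduct.map LinearMap.id (σmap q)

/-- The order-3 braided antisymmetriser `A⁽³⁾ = (id − σ₂) ∘ (id − σ₁ + σ₁∘σ₂)`. -/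
def A3 (q : ℝ) : V3 →ₗ[ℂ] V3 :=
  ((LinearMap.id : V3 →ₗ[ℂ] V3) - σ₂ q) ∘ₗ
    ((LinearMap.id : V3 →ₗ[ℂ] V3) - σ₁ q + σ₁ q ∘ₗ σ₂ q)

/-! `A⁽³⁾` sends every basis tensor `ω_a ⊗ ω_b ⊗ ω_c` to a scalar multiple of one vector, the
braided volume element (the scalar vanishes unless `(a, b, c)` is a permutation of `(−, +, z)`).
That vector is `A⁽³⁾(ω₋ ⊗ ω₊ ⊗ ω_z)` itself and is nonzero since `q ≠ 0`, so the range of `A⁽³⁾`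
is the line it spans. -/

theorem LinearMap.range_le_of_basis_mem {ι R M N : Type*} [Semiring R] [AddCommMonoid M]
    [AddCommMonoid N] [Module R M] [Module R N] (b : Module.Basis ι R M) (f : M →ₗ[R] N)
    {p : Submodule R N} (h : ∀ i, f (b i) ∈ p) : LinearMap.range f ≤ p := by
  rw [LinearMap.range_eq_map, ← b.span_eq, Submodule.map_span, Submodule.span_le]
  rintro _ ⟨_, ⟨i, rfl⟩, rfl⟩
  exact h i

lemma σmap_tmul (q : ℝ) (a b : Fin 3) : σmap q (ω a ⊗ₜ[ℂ] ω b) = σval q a b := by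
  have h : ω a ⊗ₜ[ℂ] ω b = basisVV (a, b) := by
    rw [basisVV, Module.Basis.tensorProduct_apply]; rfl
  rw [h, σmap, Module.Basis.constr_basis]

lemma σ₁_tmul (q : ℝ) (x y z : V) :
    σ₁ q (x ⊗ₜ[ℂ] (y ⊗ₜ[ℂ] z)) = TensorProduct.assoc ℂ V V V (σmap q (x ⊗ₜ[ℂ] y) ⊗ₜ[ℂ] z) :=
  rfl

lemma σ₂_tmul (q : ℝ) (x y z : V) :
    σ₂ q (x ⊗ₜ[ℂ] (y ⊗ₜ[ℂ] z)) = x ⊗ₜ[ℂ] σmap q (y ⊗ₜ[ℂ] z) :=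
  rfl

def basisVVV : Module.Basis (Fin 3 × (Fin 3 × Fin 3)) ℂ V3 :=
  (Pi.basisFun ℂ (Fin 3)).tensorProduct basisVV

lemma basisVVV_apply (a b c : Fin 3) :
    basisVVV (a, (b, c)) = ω a ⊗ₜ[ℂ] (ω b ⊗ₜ[ℂ] ω c) := by
  rw [basisVVV, Module.Basis.tensorProduct_apply, basisVV, Module.Basis.tensorProduct_apply]; rfl

def volumeElement (q : ℝ) : V3 :=
  (q : ℂ) ^ 4 • (ω 0 ⊗ₜ[ℂ] (ω 1 ⊗ₜ[ℂ] ω 2)) - (q : ℂ) ^ 10 • (ω 0 ⊗ₜ[ℂ] (ω 2 ⊗ₜ[ℂ] ω 1))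
  - (ω 1 ⊗ₜ[ℂ] (ω 0 ⊗ₜ[ℂ] ω 2)) + ((q : ℂ) ^ 6)⁻¹ • (ω 1 ⊗ₜ[ℂ] (ω 2 ⊗ₜ[ℂ] ω 0))
  + (q : ℂ) ^ 4 • (ω 2 ⊗ₜ[ℂ] (ω 0 ⊗ₜ[ℂ] ω 1)) - (ω 2 ⊗ₜ[ℂ] (ω 1 ⊗ₜ[ℂ] ω 0))

lemma volumeElement_ne_zero {q : ℝ} (hq : q ≠ 0) : volumeElement q ≠ 0 := fun h =>
  hq <| by simpa [volumeElement, basisVVV, basisVV, ω] using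
    congrArg (fun x => basisVVV.repr x (0, (1, 2))) h

def A3Coeff (q : ℝ) : Fin 3 → Fin 3 → Fin 3 → ℂ :=
  ![![![0, 0, 0], ![0, 0, 1], ![0, -((q : ℂ) ^ 4)⁻¹, 0]],
    ![![0, 0, -(q : ℂ) ^ 2], ![0, 0, 0], ![(q : ℂ) ^ 6, 0, 0]],
    ![![0, 1, 0], ![-(q : ℂ) ^ 2, 0, 0], ![0, 0, 0]]]

lemma A3_tmul {q : ℝ} (hq : q ≠ 0) (a b c : Fin 3) :
    A3 q (ω a ⊗ₜ[ℂ] (ω b ⊗ₜ[ℂ] ω c)) = A3Coeff q a b c • volumeElement q := by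
  have hq : (q : ℂ) ≠ 0 := mod_cast hq
  fin_cases a <;> fin_cases b <;> fin_cases c <;>
  · simp only [A3, volumeElement, A3Coeff, LinearMap.comp_apply, LinearMap.add_apply,
      LinearMap.sub_apply, LinearMap.id_apply, map_add, map_sub, map_smul, σ₁_tmul, σ₂_tmul,
      σmap_tmul, σval, tmul_add, add_tmul, tmul_smul, ← smul_tmul', TensorProduct.assoc_tmul,
      Fin.isValue, Fin.zero_eta, Fin.mk_one, Fin.reduceFinMk, Matrix.cons_val_zero,
      Matrix.cons_val_one, Matrix.cons_val_two, Matrix.head_cons, Matrix.tail_cons,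
      smul_add, smul_sub, smul_smul, zero_smul, one_smul, neg_smul]
    match_scalars <;> field_simp <;> ring

lemma A3_tmul_zero_one_two {q : ℝ} (hq : q ≠ 0) :
    A3 q (ω 0 ⊗ₜ[ℂ] (ω 1 ⊗ₜ[ℂ] ω 2)) = volumeElement q := by
  rw [A3_tmul hq, show A3Coeff q 0 1 2 = 1 from rfl, one_smul]

lemma range_A3 {q : ℝ} (hq : q ≠ 0) : LinearMap.range (A3 q) = ℂ ∙ volumeElement q := by
  refine le_antisymm (LinearMap.range_le_of_basis_mem basisVVV _ fun ⟨a, b, c⟩ => ?_) ?_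
  · rw [basisVVV_apply, A3_tmul hq]
    exact Submodule.smul_mem _ _ (Submodule.mem_span_singleton_self _)
  · rw [Submodule.span_singleton_le_iff_mem, ← A3_tmul_zero_one_two hq]
    exact LinearMap.mem_range_self _ _

theorem A3_rank_one_general (q : ℝ) (hq0 : 0 < q) :
    Module.finrank ℂ (LinearMap.range (A3 q)) = 1 ∧
      LinearMap.range (A3 q) =
        Submodule.span ℂ {A3 q (ω 0 ⊗ₜ[ℂ] (ω 1 ⊗ₜ[ℂ] ω 2))} := by
  rw [range_A3 hq0.ne', A3_tmul_zero_one_two hq0.ne']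
  exact ⟨finrank_span_singleton (volumeElement_ne_zero hq0.ne'), rfl⟩

/-- `A⁽³⁾` has rank 1 and its range is spanned by `A⁽³⁾(ω₋⊗ω₊⊗ω_z)`. -/
theorem A3_rank_one (q : ℝ) (hq0 : 0 < q) (hq1 : q < 1) :
    Module.finrank ℂ (LinearMap.range (A3 q)) = 1 ∧
      LinearMap.range (A3 q) =
        Submodule.span ℂ {A3 q (ω 0 ⊗ₜ[ℂ] (ω 1 ⊗ₜ[ℂ] ω 2))} :=
  A3_rank_one_general q hq0

end
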